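/- Let π be a permutation of length n > 2 with exactly one descent. If π begins with the letters 1,2 in positions 1,2, or ends with the letters n−1, n in positions n−1, n, then μ(1, π) = 0. -/

import Mathlib

/-- Two lists of naturals are order-isomorphic: same length and same relative order. -/
def OrdIso (a b : List ℕ) : Prop :=
  a.length = b.length ∧
    ∀ i, i < a.length → ∀ j, j < a.length →
      (a.getD i 0 < a.getD j 0 ↔ b.getD i 0 < b.getD j 0)

instance (a b : List ℕ) : Decidable (OrdIso a b) := by unfold OrdIso; infer_instance

/-- `σ` occurs as a pattern in `π`: some subsequence of `π` is order-isomorphic to `σ`. -/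
def occursIn (σ π : List ℕ) : Prop := ∃ s ∈ π.sublists, OrdIso σ s

instance (σ π : List ℕ) : Decidable (occursIn σ π) := by unfold occursIn; infer_instance

/-- `l` is a permutation of `1, …, l.length`. -/
def IsPermList (l : List ℕ) : Prop := l.Perm ((List.range l.length).map (· + 1))

/-- The number of descents of `l` (positions `i` with `l i > l (i+1)`, 0-based). -/
def des (l : List ℕ) : ℕ :=
  ((List.range (l.length - 1)).filter (fun i => decide (l.getD (i+1) 0 < l.getD i 0))).length

/-- `d_π(c)`: one plus the number of descents of `π` preceding the letter `c`. -/
def dval (l : List ℕ) (c : ℕ) : ℕ :=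
  1 + ((List.range (l.idxOf c)).filter (fun i => decide (l.getD (i+1) 0 < l.getD i 0))).length

/-- The word `f(π) = d_π(1) d_π(2) ⋯ d_π(n)`. -/
def fword (l : List ℕ) : List ℕ := (List.range l.length).map (fun i => dval l (i+1))

/-- The largest letter of the word `w`. -/
def maxLetter (w : List ℕ) : ℕ := w.foldr max 0

/-- `p_w(j)`: positions (1-based, increasing) of the letter `j` in `w`. -/
def posList (w : List ℕ) (j : ℕ) : List ℕ :=
  ((List.range w.length).filter (fun i => decide (w.getD i 0 = j))).map (· + 1)

/-- `g(w)`: the concatenation of the position lists `p_w(1), …, p_w(max w)`. -/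
def gperm (w : List ℕ) : List ℕ := (List.range (maxLetter w)).flatMap (fun j => posList w (j+1))

/-- Membership in the poset 𝒜̂: positive letters, every letter in `{1,…,max w}` occurs,
and the rightmost occurrence of each `i < max w` is preceded by an occurrence of `i+1`. -/
def InAhat (w : List ℕ) : Prop :=
  (∀ x ∈ w, 1 ≤ x) ∧
  (∀ i, i < maxLetter w → i + 1 ∈ w) ∧
  (∀ i, i < maxLetter w - 1 → ∃ t, t < w.length ∧ w.getD t 0 = i + 1 ∧
     (∀ s, s < w.length → t < s → w.getD s 0 ≠ i + 1) ∧ ∃ u, u < t ∧ w.getD u 0 = i + 2)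

instance (w : List ℕ) : Decidable (InAhat w) := by unfold InAhat; infer_instance

/-- All permutations (as lists on `1..k`) of every length `k ≤ n`. -/
def permsUpTo (n : ℕ) : List (List ℕ) :=
  (List.range (n+1)).flatMap (fun k => ((List.range k).map (· + 1)).permutations)

/-- The interval `[a,b]` in the pattern containment poset, as a list. -/
def intervalList (a b : List ℕ) : List (List ℕ) :=
  (permsUpTo b.length).filter (fun z => decide (occursIn a z ∧ occursIn z b))

/-- `μ` is the Möbius function of the poset of permutations under pattern containment:
`μ(a,a) = 1` and, for `a < b`, `∑_{a ≤ z ≤ b} μ(a,z) = 0`. -/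
def MoebiusOn (μ : List ℕ → List ℕ → ℤ) : Prop :=
  (∀ a, μ a a = 1) ∧
  ∀ a b, IsPermList a → IsPermList b → occursIn a b → a ≠ b →
    ((intervalList a b).map (μ a)).sum = 0

/-- All lists of length `n` with entries in `{0, …, k-1}`. -/
def listsOf (n k : ℕ) : List (List ℕ) :=
  (List.range n).foldr (fun _ acc => (List.range k).flatMap (fun a => acc.map (a :: ·))) [[]]

/-- The letters of `π` in the nonzero positions of `η`. -/
def embOcc (η π : List ℕ) : List ℕ :=
  ((List.range π.length).filter (fun i => decide (η.getD i 0 ≠ 0))).map (fun i => π.getD i 0)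

/-- `η` is an embedding of `σ` in `π`: a sequence of length `|π|` whose nonzero positions
are the positions of an occurrence of `σ` in `π` and whose nonzero letters spell `σ`. -/
def IsEmbedding (η σ π : List ℕ) : Prop :=
  η.length = π.length ∧ η.filter (fun x => decide (x ≠ 0)) = σ ∧ OrdIso σ (embOcc η π)

/-- `η` is a normal embedding: nonzero at every letter of `π` lying in the tail of an
adjacency (i.e. every position whose predecessor holds the previous value). -/
def IsNormalEmbedding (η σ π : List ℕ) : Prop :=
  IsEmbedding η σ π ∧
    ∀ i, i < π.length → 0 < i → π.getD i 0 = π.getD (i-1) 0 + 1 → η.getD i 0 ≠ 0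

instance (η σ π : List ℕ) : Decidable (IsNormalEmbedding η σ π) := by
  unfold IsNormalEmbedding IsEmbedding; infer_instance

/-- The number of normal embeddings of `σ` in `π`. -/
def normalCount (σ π : List ℕ) : ℕ :=
  ((listsOf π.length (σ.length + 1)).filter (fun η => decide (IsNormalEmbedding η σ π))).length

/-- The total number of letters in all tails of all adjacencies of `π`;
equivalently, the number of adjacency pairs of `π`. -/
def tailCount (π : List ℕ) : ℕ :=
  ((List.range π.length).filter (fun i => decide (0 < i ∧ π.getD i 0 = π.getD (i-1) 0 + 1))).length

/-- The number of occurrences of `σ` as a pattern in `π`. -/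
def occCount (σ π : List ℕ) : ℕ :=
  ((List.range π.length).sublists.filter
    (fun s => decide (OrdIso σ (s.map (fun i => π.getD i 0))))).length

/-- All words of length `n` on the alphabet `{1, …, k}`. -/
def wordsOf (n k : ℕ) : List (List ℕ) := (listsOf n k).map (List.map (· + 1))

/-- All permutations of `1, …, n`, as lists. -/
def permsOfLen (n : ℕ) : List (List ℕ) := ((List.range n).map (· + 1)).permutations

/-!
Suppose `π` begins with `1 2` (the case of a final `n-1 n` is symmetric) and let `a` be `π` with
its first letter deleted. Since the letters `1, 2` are adjacent both in position and in value,
an occurrence of a pattern `z` in `π` that does not use both of them can be moved into `a`.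
So `[1, π]` consists of `[1, a]` and of permutations all of whose occurrences use the initial
`1 2`; these begin with `1 2` themselves, have length at least three (`12` lies below `a`), and
except for `π` are shorter than `π`, so by induction `μ(1, z) = 0` for them. As the Möbius sums
over `[1, π]` and over `[1, a]` both vanish, so does `μ(1, π)`.
-/

open List

theorem OrdIso.refl (a : List ℕ) : OrdIso a a := ⟨rfl, fun _ _ _ _ => Iff.rfl⟩

theorem OrdIso.symm {a b : List ℕ} (h : OrdIso a b) : OrdIso b a :=
  ⟨h.1.symm, fun i hi j hj => (h.2 i (h.1 ▸ hi) j (h.1 ▸ hj)).symm⟩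

theorem OrdIso.trans {a b c : List ℕ} (h₁ : OrdIso a b) (h₂ : OrdIso b c) : OrdIso a c :=
  ⟨h₁.1.trans h₂.1, fun i hi j hj => (h₁.2 i hi j hj).trans (h₂.2 i (h₁.1 ▸ hi) j (h₁.1 ▸ hj))⟩

theorem ordIso_map {s : List ℕ} {g : ℕ → ℕ} (hg : ∀ x ∈ s, ∀ y ∈ s, (x < y ↔ g x < g y)) :
    OrdIso s (s.map g) := by
  refine ⟨(length_map g).symm, fun i hi j hj => ?_⟩
  simp only [getD_eq_getElem?_getD, getElem?_map, getElem?_eq_getElem hi, getElem?_eq_getElem hj,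
    Option.map_some, Option.getD_some]
  exact hg _ (getElem_mem hi) _ (getElem_mem hj)

theorem OrdIso.exists_sublist {y t s : List ℕ} (h : OrdIso y t) (hs : s <+ y) :
    ∃ t', t' <+ t ∧ OrdIso s t' := by
  obtain ⟨is, rfl, hpair⟩ := sublist_eq_map_getElem hs
  have hl : y.length = t.length := h.1
  refine ⟨(is.map (Fin.cast hl)).map (fun i => t[i]), map_getElem_sublist (pairwise_map.2 hpair),
    by simp, fun i hi j hj => ?_⟩
  simp only [length_map] at hi hj
  have hti : (is[i] : ℕ) < t.length := hl ▸ (is[i]).isLt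
  have htj : (is[j] : ℕ) < t.length := hl ▸ (is[j]).isLt
  simpa [getD_eq_getElem?_getD, getElem?_eq_getElem hi, getElem?_eq_getElem hj,
    getElem?_eq_getElem hti, getElem?_eq_getElem htj] using h.2 _ (is[i]).isLt _ (is[j]).isLt

theorem occursIn_of_ordIso_of_sublist {σ s π : List ℕ} (h : OrdIso σ s) (hs : s <+ π) :
    occursIn σ π :=
  ⟨s, mem_sublists.2 hs, h⟩

theorem OrdIso.occursIn {a b : List ℕ} (h : OrdIso a b) : occursIn a b :=
  occursIn_of_ordIso_of_sublist h (Sublist.refl b)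

theorem List.Sublist.occursIn {a b : List ℕ} (h : a <+ b) : occursIn a b :=
  occursIn_of_ordIso_of_sublist (OrdIso.refl a) h

theorem occursIn_trans {x y w : List ℕ} (h₁ : occursIn x y) (h₂ : occursIn y w) :
    occursIn x w := by
  obtain ⟨s, hs, hx⟩ := h₁
  obtain ⟨t, ht, hy⟩ := h₂
  obtain ⟨t', ht', hst⟩ := OrdIso.exists_sublist hy (mem_sublists.1 hs)
  exact occursIn_of_ordIso_of_sublist (OrdIso.trans hx hst) (ht'.trans (mem_sublists.1 ht))

theorem occursIn.length_le {σ π : List ℕ} (h : occursIn σ π) : σ.length ≤ π.length := by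
  obtain ⟨s, hs, hiso⟩ := h
  exact hiso.1 ▸ (mem_sublists.1 hs).length_le

theorem countP_eq_countP_range_getD (l : List ℕ) (p : ℕ → Bool) :
    l.countP p = (range l.length).countP (fun j => p (l.getD j 0)) := by
  have hl : (range l.length).map (fun j => l.getD j 0) = l :=
    ext_getElem (by simp) fun i _ hi => by simp [getElem?_eq_getElem hi]
  conv_lhs => rw [← hl]
  rw [countP_map]
  rfl

theorem OrdIso.countP_lt_getD {a b : List ℕ} (h : OrdIso a b) {i : ℕ} (hi : i < a.length) :
    a.countP (· < a.getD i 0) = b.countP (· < b.getD i 0) := by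
  rw [countP_eq_countP_range_getD a, countP_eq_countP_range_getD b, ← h.1]
  exact countP_congr fun j hj => by simpa using h.2 j (mem_range.1 hj) i hi

theorem countP_range_add_one_lt (k v : ℕ) :
    (range k).countP (fun j => j + 1 < v) = min k (v - 1) := by
  induction k with
  | zero => simp
  | succ k ih =>
    rw [range_succ, countP_append, ih]
    by_cases hk : k + 1 < v <;> simp [hk] <;> omega

theorem getD_mem {l : List ℕ} {i : ℕ} (h : i < l.length) : l.getD i 0 ∈ l := by
  rw [getD_eq_getElem l 0 h]
  exact getElem_mem h

theorem IsPermList.mem_iff {l : List ℕ} (h : IsPermList l) {x : ℕ} :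
    x ∈ l ↔ 1 ≤ x ∧ x ≤ l.length := by
  rw [List.Perm.mem_iff h]
  simp only [mem_map, mem_range]
  constructor
  · rintro ⟨y, hy, rfl⟩; omega
  · rintro ⟨h1, h2⟩; exact ⟨x - 1, by omega, by omega⟩

theorem IsPermList.nodup {l : List ℕ} (h : IsPermList l) : l.Nodup :=
  List.Perm.nodup_iff h |>.2 (nodup_range.map fun _ _ => Nat.succ.inj)

theorem IsPermList.getD_eq_countP_add_one {l : List ℕ} (h : IsPermList l) {i : ℕ}
    (hi : i < l.length) : l.getD i 0 = l.countP (· < l.getD i 0) + 1 := by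
  have hv := h.mem_iff.1 (getD_mem hi)
  rw [List.Perm.countP_eq _ h, countP_map]
  have := countP_range_add_one_lt l.length (l.getD i 0)
  simp only [Function.comp_def] at this ⊢
  omega

theorem IsPermList.getD_eq_of_ordIso {z s : List ℕ} (hz : IsPermList z) (h : OrdIso z s) {i : ℕ}
    (hi : i < z.length) : z.getD i 0 = s.countP (· < s.getD i 0) + 1 := by
  rw [hz.getD_eq_countP_add_one hi, h.countP_lt_getD hi]

theorem IsPermList.eq_of_ordIso {z π : List ℕ} (hz : IsPermList z) (hπ : IsPermList π)
    (h : OrdIso z π) : z = π := by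
  refine ext_getElem h.1 fun i hi hi' => ?_
  rw [← getD_eq_getElem _ 0 hi, ← getD_eq_getElem _ 0 hi', hz.getD_eq_of_ordIso h hi,
    ← hπ.getD_eq_countP_add_one hi']

theorem IsPermList.length_lt_of_occursIn {z π : List ℕ} (hz : IsPermList z) (hπ : IsPermList π)
    (h : occursIn z π) (hne : z ≠ π) : z.length < π.length := by
  refine lt_of_le_of_ne h.length_le fun hlen => hne ?_
  obtain ⟨s, hs, hiso⟩ := h
  have hsπ : s = π := (mem_sublists.1 hs).eq_of_length (hiso.1 ▸ hlen)
  exact hz.eq_of_ordIso hπ (hsπ ▸ hiso)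

theorem isPermList_one : IsPermList [1] := by
  simp [IsPermList]

theorem occursIn_one {z : List ℕ} (hz : z ≠ []) : occursIn [1] z := by
  obtain ⟨x, t, rfl⟩ := exists_cons_of_ne_nil hz
  exact occursIn_of_ordIso_of_sublist (s := [x]) ⟨rfl, by simp⟩ ((nil_sublist t).cons_cons x)

theorem mem_permsUpTo_iff {z : List ℕ} {N : ℕ} :
    z ∈ permsUpTo N ↔ IsPermList z ∧ z.length ≤ N := by
  simp only [permsUpTo, mem_flatMap, mem_range, mem_permutations]
  constructor
  · rintro ⟨k, hk, hz⟩
    have hl : z.length = k := by simp [hz.length_eq]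
    exact ⟨by rwa [IsPermList, hl], by omega⟩
  · rintro ⟨h1, h2⟩
    exact ⟨z.length, by omega, h1⟩

theorem permsUpTo_succ (m : ℕ) :
    permsUpTo (m + 1) = permsUpTo m ++ ((range (m + 1)).map (· + 1)).permutations := by
  simp [permsUpTo, range_succ, flatMap_append]

theorem filter_occursIn_intervalList {σ a π : List ℕ} (haπ : occursIn a π)
    (hlen : a.length + 1 = π.length) :
    (intervalList σ π).filter (fun z => decide (occursIn z a)) = intervalList σ a := by
  unfold intervalList
  rw [filter_filter, ← hlen, permsUpTo_succ, filter_append]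
  have htop : ((range (a.length + 1)).map (· + 1)).permutations.filter
      (fun z => decide (occursIn z a) && decide (occursIn σ z ∧ occursIn z π)) = [] := by
    refine filter_eq_nil_iff.2 fun z hz hza => ?_
    have hzlen : z.length = a.length + 1 := by simp [(mem_permutations.1 hz).length_eq]
    have := (of_decide_eq_true (Bool.and_eq_true_iff.1 hza).1).length_le
    omega
  rw [htop, append_nil]
  refine filter_congr fun z _ => ?_
  rw [← Bool.decide_and, decide_eq_decide]
  exact ⟨fun h => ⟨h.2.1, h.1⟩, fun h => ⟨h.2, h.1, occursIn_trans h.2 haπ⟩⟩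

/-- The Möbius sum over `[1, π]` splits into the sum over `[1, a]`, which vanishes,
and the terms outside it, which all vanish except `μ(1, π)`. -/
theorem moebius_one_eq_zero_of_split {μ : List ℕ → List ℕ → ℤ} (hμ : MoebiusOn μ)
    {π a : List ℕ} (hπ : IsPermList π) (ha : IsPermList a) (ha2 : 2 ≤ a.length)
    (hlen : a.length + 1 = π.length) (haπ : occursIn a π)
    (hz : ∀ z, IsPermList z → occursIn z π → ¬ occursIn z a → z ≠ π → μ [1] z = 0) :
    μ [1] π = 0 := by
  have hπ1 : [1] ≠ π := fun h => by have := congrArg length h; simp at this; omega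
  have ha1 : [1] ≠ a := fun h => by rw [← h] at ha2; simp at ha2
  have hsum := hμ.2 [1] π isPermList_one hπ (occursIn_one (ne_nil_of_length_pos (by omega))) hπ1
  rw [← sum_map_filter_add_sum_map_filter_not (fun z => occursIn z a),
    filter_occursIn_intervalList haπ hlen,
    hμ.2 [1] a isPermList_one ha (occursIn_one (ne_nil_of_length_pos (by omega))) ha1, zero_add,
    sum_map_eq_nsmul_single π] at hsum
  · have hmem : π ∈ (intervalList [1] π).filter (fun z => decide ¬occursIn z a) := by
      simp only [mem_filter, intervalList, mem_permsUpTo_iff, decide_eq_true_eq]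
      exact ⟨⟨⟨hπ, le_rfl⟩, occursIn_one (ne_nil_of_length_pos (by omega)),
        (OrdIso.refl π).occursIn⟩, fun h => by have := h.length_le; omega⟩
    -- `sum_map_eq_nsmul_single` counts with the `BEq` instance derived from `DecidableEq`
    have hcount := (@count_pos_iff _ instBEqOfDecidableEq _ _ _).2 hmem
    exact (smul_eq_zero.1 hsum).resolve_left hcount.ne'
  · intro z hne hz'
    simp only [mem_filter, intervalList, mem_permsUpTo_iff, decide_eq_true_eq] at hz'
    exact hz z hz'.1.1.1 hz'.1.2.2 hz'.2 hne

def IsSplitPattern (P : List ℕ → Prop) (π a : List ℕ) : Prop :=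
  IsPermList a ∧ 2 ≤ a.length ∧ a.length + 1 = π.length ∧ occursIn a π ∧
    ∀ z, IsPermList z → occursIn z π → ¬ occursIn z a → P z

theorem moebius_one_eq_zero_of_forall_isSplitPattern {μ : List ℕ → List ℕ → ℤ}
    (hμ : MoebiusOn μ) {P : List ℕ → Prop}
    (hP : ∀ π, IsPermList π → P π → ∃ a, IsSplitPattern P π a)
    {π : List ℕ} (hπ : IsPermList π) (hPπ : P π) : μ [1] π = 0 := by
  induction hn : π.length using Nat.strong_induction_on generalizing π with
  | _ n ih =>
    obtain ⟨a, ha, ha2, hlen, haπ, hPz⟩ := hP π hπ hPπ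
    refine moebius_one_eq_zero_of_split hμ hπ ha ha2 hlen haπ fun z hz hzπ hza hne => ?_
    exact ih _ (hn ▸ hz.length_lt_of_occursIn hπ hzπ hne) hz (hPz z hz hzπ hza) rfl

theorem ordIso_append_succ_cons {l₁ l₂ : List ℕ} {x : ℕ} (hx : x ∉ l₁ ++ l₂)
    (hx₁ : x + 1 ∉ l₁ ++ l₂) : OrdIso (l₁ ++ (x + 1) :: l₂) (l₁ ++ x :: l₂) := by
  set g : ℕ → ℕ := fun w => if w = x + 1 then x else w
  have hfix : ∀ w ∈ l₁ ++ l₂, g w = w := fun w hw => if_neg fun h : w = x + 1 => hx₁ (h ▸ hw)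
  have hmap : (l₁ ++ (x + 1) :: l₂).map g = l₁ ++ x :: l₂ := by
    simp only [map_append, map_cons, g, ↓reduceIte]
    rw [map_congr_left fun w hw => hfix w (mem_append_left _ hw),
      map_congr_left fun w hw => hfix w (mem_append_right _ hw), map_id', map_id']
  have hcases : ∀ w ∈ l₁ ++ (x + 1) :: l₂,
      (w = x + 1 ∧ g w = x) ∨ (w ≠ x ∧ w ≠ x + 1 ∧ g w = w) := by
    intro w hw
    by_cases h : w = x + 1
    · exact Or.inl ⟨h, if_pos h⟩
    · have hw' : w ∈ l₁ ++ l₂ := by simp_all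
      exact Or.inr ⟨fun e => hx (e ▸ hw'), h, hfix w hw'⟩
  rw [← hmap]
  refine ordIso_map fun w hw w' hw' => ?_
  rcases hcases w hw with ⟨h₁, h₂⟩ | ⟨h₁, h₂, h₃⟩ <;>
    rcases hcases w' hw' with ⟨h₁', h₂'⟩ | ⟨h₁', h₂', h₃'⟩ <;> omega

/-- `x` and `x + 1` compare alike with every other letter, so an occurrence using `x + 1` but
not `x` may use `x` instead. -/
theorem eq_adjacent_or_occursIn_of_sublist {L R s : List ℕ} {x : ℕ}
    (hnd : (L ++ x :: (x + 1) :: R).Nodup) (hs : s <+ L ++ x :: (x + 1) :: R) :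
    (∃ s₁ s₂, s = s₁ ++ x :: (x + 1) :: s₂ ∧ s₁ <+ L ∧ s₂ <+ R) ∨ occursIn s (L ++ x :: R) := by
  have hx : x ∉ L ++ R := fun h =>
    (nodup_cons.1 (nodup_middle.1 hnd)).1 (by simp only [mem_append, mem_cons] at h ⊢; tauto)
  have hx₁ : x + 1 ∉ L ++ R := (nodup_cons.1 (nodup_middle.1 (nodup_middle.1 hnd).of_cons)).1
  obtain ⟨s₁, t, rfl, hs₁, ht⟩ := sublist_append_iff.1 hs
  rcases sublist_cons_iff.1 ht with hxt | ⟨t₁, rfl, ht₁⟩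
  · rcases sublist_cons_iff.1 hxt with htR | ⟨t₂, rfl, ht₂⟩
    · exact Or.inr (hs₁.append (htR.cons x)).occursIn
    · exact Or.inr (occursIn_trans
        (ordIso_append_succ_cons (fun h => hx ((hs₁.append ht₂).subset h))
          (fun h => hx₁ ((hs₁.append ht₂).subset h))).occursIn
        (hs₁.append (ht₂.cons_cons x)).occursIn)
  · rcases sublist_cons_iff.1 ht₁ with htR | ⟨t₂, rfl, ht₂⟩
    · exact Or.inr (hs₁.append (htR.cons_cons x)).occursIn
    · exact Or.inl ⟨s₁, t₂, rfl, hs₁, ht₂⟩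

theorem ordIso_pair {x₀ x₁ y₀ y₁ : ℕ} (hx : x₀ < x₁) (hy : y₀ < y₁) :
    OrdIso [x₀, x₁] [y₀, y₁] := by
  refine ⟨rfl, fun i hi j hj => ?_⟩
  simp only [length_cons, length_nil] at hi hj
  interval_cases i <;> interval_cases j <;> simp <;> omega

theorem IsPermList.map_sub_one_of_cons {l : List ℕ} (h : IsPermList (1 :: l)) :
    IsPermList (l.map (· - 1)) := by
  have h' : 1 :: l ~ 1 :: (range l.length).map (· + 2) := by
    simpa [IsPermList, range_succ_eq_map, Function.comp_def] using h
  have e : ((range l.length).map (· + 2)).map (· - 1) = (range l.length).map (· + 1) := by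
    simp only [map_map]
    exact map_congr_left fun _ _ => rfl
  rw [IsPermList, length_map, ← e]
  exact h'.cons_inv.map (· - 1)

theorem IsPermList.of_append_singleton {l : List ℕ} (h : IsPermList (l ++ [l.length + 1])) :
    IsPermList l := by
  simpa [IsPermList, range_succ, perm_append_right_iff] using h

def StartsWithOneTwo (z : List ℕ) : Prop :=
  3 ≤ z.length ∧ z.getD 0 0 = 1 ∧ z.getD 1 0 = 2

theorem StartsWithOneTwo.exists_eq_cons {π : List ℕ} (h : StartsWithOneTwo π) :
    ∃ ρ, ρ ≠ [] ∧ π = 1 :: 2 :: ρ := by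
  obtain ⟨h3, h0, h1⟩ := h
  rcases π with _ | ⟨x, _ | ⟨y, ρ⟩⟩
  iterate 2 simp at h3
  exact ⟨ρ, ne_nil_of_length_pos (by simp only [length_cons] at h3; omega), by simp_all⟩

theorem IsPermList.three_le_of_mem {ρ : List ℕ} (hπ : IsPermList (1 :: 2 :: ρ)) {w : ℕ}
    (hw : w ∈ ρ) : 3 ≤ w := by
  have hw1 := (hπ.mem_iff.1 (mem_cons_of_mem _ (mem_cons_of_mem _ hw))).1
  have hnd := hπ.nodup
  simp only [nodup_cons, mem_cons] at hnd
  have : w ≠ 1 := fun h => hnd.1 (Or.inr (h ▸ hw))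
  have : w ≠ 2 := fun h => hnd.2.1 (h ▸ hw)
  omega

theorem startsWithOneTwo_of_ordIso {z s : List ℕ} (hz : IsPermList z)
    (h : OrdIso z (1 :: 2 :: s)) (hs : ∀ w ∈ s, 3 ≤ w) (hne : s ≠ []) : StartsWithOneTwo z := by
  have hlen : z.length = s.length + 2 := h.1
  refine ⟨by have := length_pos_of_ne_nil hne; omega, ?_, ?_⟩
  · rw [hz.getD_eq_of_ordIso h (by omega)]
    simpa [countP_eq_zero] using fun w hw => (by have := hs w hw; omega : w ≠ 0)
  · rw [hz.getD_eq_of_ordIso h (by omega)]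
    simpa [countP_eq_zero] using fun w hw => (by have := hs w hw; omega : 1 < w)

theorem exists_isSplitPattern_of_startsWithOneTwo {π : List ℕ} (hπ : IsPermList π)
    (hP : StartsWithOneTwo π) : ∃ a, IsSplitPattern StartsWithOneTwo π a := by
  obtain ⟨ρ, hρ, rfl⟩ := hP.exists_eq_cons
  have h2ρ : ∀ w ∈ 2 :: ρ, 2 ≤ w :=
    forall_mem_cons.2 ⟨le_rfl, fun w hw => by linarith [hπ.three_le_of_mem hw]⟩
  have hshift : OrdIso (2 :: ρ) ((2 :: ρ).map (· - 1)) := ordIso_map fun w hw w' hw' => by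
    have := h2ρ w hw; have := h2ρ w' hw'; omega
  have hdel : OrdIso (1 :: ρ) (2 :: ρ) :=
    ordIso_append_succ_cons (l₁ := []) (fun h => by simpa using hπ.three_le_of_mem h)
      (fun h => by simpa using hπ.three_le_of_mem h) |>.symm
  refine ⟨(2 :: ρ).map (· - 1), by simpa using hπ.map_sub_one_of_cons,
    by have := length_pos_of_ne_nil hρ; simp only [length_map, length_cons]; omega, by simp,
    occursIn_trans hshift.symm.occursIn (sublist_cons_self 1 _).occursIn,
    fun z hz hzπ hza => ?_⟩
  obtain ⟨s, hs, hzs⟩ := hzπ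
  rcases eq_adjacent_or_occursIn_of_sublist (L := []) hπ.nodup (mem_sublists.1 hs) with
    ⟨_, s₂, rfl, hs₁, hs₂⟩ | hs'
  · rw [sublist_nil.1 hs₁, nil_append] at hzs
    refine startsWithOneTwo_of_ordIso hz hzs (fun w hw => hπ.three_le_of_mem (hs₂.subset hw)) ?_
    rintro rfl
    obtain ⟨c, ρ', rfl⟩ := exists_cons_of_ne_nil hρ
    have hc := hπ.three_le_of_mem mem_cons_self
    refine hza (occursIn_trans ?_ hshift.occursIn)
    exact occursIn_of_ordIso_of_sublist (hzs.trans (ordIso_pair (by omega) (by omega)))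
      (((nil_sublist ρ').cons_cons c).cons_cons 2)
  · exact (hza (occursIn_trans hzs.occursIn
      (occursIn_trans (occursIn_trans hs' hdel.occursIn) hshift.occursIn))).elim

def EndsWithTopPair (z : List ℕ) : Prop :=
  3 ≤ z.length ∧ z.getD (z.length - 2) 0 = z.length - 1 ∧ z.getD (z.length - 1) 0 = z.length

theorem EndsWithTopPair.exists_eq_append {π : List ℕ} (h : EndsWithTopPair π) :
    ∃ ρ, ρ ≠ [] ∧ π = ρ ++ [ρ.length + 1, ρ.length + 2] := by
  obtain ⟨h3, h0, h1⟩ := h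
  rcases π.eq_nil_or_concat' with rfl | ⟨L, y, rfl⟩
  · simp at h3
  rcases L.eq_nil_or_concat' with rfl | ⟨ρ, x, rfl⟩
  · simp at h3
  simp at h0 h1 h3
  exact ⟨ρ, ne_nil_of_length_pos (by omega), by simp [h0, h1]⟩

theorem IsPermList.le_length_of_mem {ρ : List ℕ}
    (hπ : IsPermList (ρ ++ [ρ.length + 1, ρ.length + 2])) {w : ℕ} (hw : w ∈ ρ) :
    w ≤ ρ.length := by
  have hw' := (hπ.mem_iff.1 (mem_append_left _ hw)).2
  have hnd := hπ.nodup
  simp only [nodup_append, mem_cons, not_mem_nil, or_false] at hnd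
  have : w ≠ ρ.length + 1 := hnd.2.2 w hw _ (Or.inl rfl)
  have : w ≠ ρ.length + 2 := hnd.2.2 w hw _ (Or.inr rfl)
  simp only [length_append, length_cons, length_nil] at hw'
  omega

theorem endsWithTopPair_of_ordIso {z s : List ℕ} {m : ℕ} (hz : IsPermList z)
    (h : OrdIso z (s ++ [m + 1, m + 2])) (hs : ∀ w ∈ s, w ≤ m) (hne : s ≠ []) :
    EndsWithTopPair z := by
  have hlen : z.length = s.length + 2 := by simp [h.1]
  refine ⟨by have := length_pos_of_ne_nil hne; omega, ?_, ?_⟩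
  · rw [hlen, hz.getD_eq_of_ordIso h (by omega)]
    simpa [countP_eq_length] using hs
  · rw [hlen, hz.getD_eq_of_ordIso h (by omega)]
    simpa [countP_eq_length] using fun w hw => (by have := hs w hw; omega : w < m + 2)

theorem exists_isSplitPattern_of_endsWithTopPair {π : List ℕ} (hπ : IsPermList π)
    (hP : EndsWithTopPair π) : ∃ a, IsSplitPattern EndsWithTopPair π a := by
  obtain ⟨ρ, hρ, rfl⟩ := hP.exists_eq_append
  refine ⟨ρ ++ [ρ.length + 1], IsPermList.of_append_singleton (by simpa using hπ),
    by have := length_pos_of_ne_nil hρ; simp only [length_append, length_singleton]; omega,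
    by simp, by simpa using (sublist_append_left (ρ ++ [ρ.length + 1]) [ρ.length + 2]).occursIn,
    fun z hz hzπ hza => ?_⟩
  obtain ⟨s, hs, hzs⟩ := hzπ
  rcases eq_adjacent_or_occursIn_of_sublist (R := []) hπ.nodup (mem_sublists.1 hs) with
    ⟨s₁, _, rfl, hs₁, hs₂⟩ | hs'
  · rw [sublist_nil.1 hs₂] at hzs
    refine endsWithTopPair_of_ordIso hz hzs (fun w hw => hπ.le_length_of_mem (hs₁.subset hw)) ?_
    rintro rfl
    obtain ⟨c, ρ', hρ'⟩ := exists_cons_of_ne_nil hρ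
    have hc := hπ.le_length_of_mem (hρ' ▸ mem_cons_self)
    refine hza (occursIn_of_ordIso_of_sublist
      (hzs.trans (ordIso_pair (y₀ := c) (y₁ := ρ.length + 1) (by omega) (by omega))) ?_)
    rw [hρ', cons_append]
    exact (sublist_append_right ρ' _).cons_cons c
  · exact (hza (occursIn_trans hzs.occursIn hs')).elim

theorem moebius_zero_of_ends_general (μ : List ℕ → List ℕ → ℤ) (hμ : MoebiusOn μ)
    (π : List ℕ) (n : ℕ) (hn : π.length = n) (h2 : 2 < n)
    (hπ : IsPermList π)
    (h : (π.getD 0 0 = 1 ∧ π.getD 1 0 = 2) ∨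
         (π.getD (n-2) 0 = n - 1 ∧ π.getD (n-1) 0 = n)) :
    μ [1] π = 0 := by
  subst hn
  rcases h with ⟨h0, h1⟩ | ⟨h0, h1⟩
  · exact moebius_one_eq_zero_of_forall_isSplitPattern hμ
      (fun _ => exists_isSplitPattern_of_startsWithOneTwo) hπ ⟨h2, h0, h1⟩
  · exact moebius_one_eq_zero_of_forall_isSplitPattern hμ
      (fun _ => exists_isSplitPattern_of_endsWithTopPair) hπ ⟨h2, h0, h1⟩

/-- if `π` (length `n > 2`, one descent) begins with `1,2` or ends with
`n-1, n`, then `μ(1,π) = 0`. -/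
theorem moebius_zero_of_ends (μ : List ℕ → List ℕ → ℤ) (hμ : MoebiusOn μ)
    (π : List ℕ) (n : ℕ) (hn : π.length = n) (h2 : 2 < n)
    (hπ : IsPermList π) (hd : des π = 1)
    (h : (π.getD 0 0 = 1 ∧ π.getD 1 0 = 2) ∨
         (π.getD (n-2) 0 = n - 1 ∧ π.getD (n-1) 0 = n)) :
    μ [1] π = 0 :=
  moebius_zero_of_ends_general μ hμ π n hn h2 hπ h
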